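/- For any player i, Markovian policy π, and Markovian stochastic modification φ̄^i, define in the second augmented MDP (state space S̄ = S × A^i plus absorbing state b, kernel P̄^π_t((s_{t+1}, a^i_{t+1}) | (s_t, a^i_t), â^i_t) = (1/|A^i|) Σ_{a^{-i}_t} P_t(s_{t+1}|s_t,(â^i_t,a^{-i}_t)) π_t((a^i_t,a^{-i}_t)|s_t), initial distribution ρ̄(s,a^i) = ρ(s)/|A^i|) the reward r̄^{i,π}_t((s,a^i), â^i) = |A^i|^t Σ_{a^{-i}} r^i_t(s, (â^i, a^{-i})) π_t((a^i, a^{-i})|s) and r̄(b) = 0. Then the expected cumulative reward of policy φ̄^i in this MDP equals the expected cumulative reward of the modified policy in the original game: V^{r̄^{i,π}}(φ̄^i) = V^{r^i}(φ̄^i ∘ π). -/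

import Mathlib

open Finset

namespace MG

noncomputable section

variable {S : Type} {ι : Type} {A : ι → Type}
variable [Fintype S] [DecidableEq S] [Fintype ι] [DecidableEq ι]
variable [∀ i, Fintype (A i)] [∀ i, DecidableEq (A i)]

/-- A finitely supported probability distribution represented as a real-valued function. -/
def IsDist {X : Type} [Fintype X] (p : X → ℝ) : Prop :=
  (∀ x, 0 ≤ p x) ∧ ∑ x, p x = 1

/-- A Markovian joint policy: at each time `t` and state `s`, a distribution over joint actions. -/
abbrev MPolicy (S : Type) (A : ι → Type) := ℕ → S → (∀ i, A i) → ℝ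

def IsMPolicy (π : MPolicy S A) : Prop := ∀ t s, IsDist (π t s)

/-- A valid transition kernel. -/
def IsKernel (P : ℕ → S → (∀ i, A i) → S → ℝ) : Prop := ∀ t s a, IsDist (P t s a)

/-- A general (history-dependent, possibly non-Markovian) joint policy. -/
abbrev HPolicy (S : Type) (A : ι → Type) :=
  (t : ℕ) → (Fin t → S × (∀ i, A i)) → S → (∀ i, A i) → ℝ

/-- A Markovian policy viewed as a history-dependent policy. -/
def lift (π : MPolicy S A) : HPolicy S A := fun t _ s a => π t s a

/-- Probability that, under initial distribution `ρ`, kernels `P` and general policy `σ`,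
the history `h` occurred during the first `t` steps and the current state is `s`. -/
def histProb (ρ : S → ℝ) (P : ℕ → S → (∀ i, A i) → S → ℝ) (σ : HPolicy S A) :
    (t : ℕ) → (Fin t → S × (∀ i, A i)) → S → ℝ
  | 0, _, s => ρ s
  | (t+1), h, s =>
      histProb ρ P σ t (fun k => h k.castSucc) (h (Fin.last t)).1 *
        σ t (fun k => h k.castSucc) (h (Fin.last t)).1 (h (Fin.last t)).2 *
        P t (h (Fin.last t)).1 (h (Fin.last t)).2 s

/-- State-action occupancy measure at (0-based) time `t` of a general policy `σ`. -/
def occ (ρ : S → ℝ) (P : ℕ → S → (∀ i, A i) → S → ℝ) (σ : HPolicy S A)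
    (t : ℕ) (s : S) (a : ∀ i, A i) : ℝ :=
  ∑ h : Fin t → S × (∀ i, A i), histProb ρ P σ t h s * σ t h s a

/-- Expected cumulative value of a stage function `f` over horizon `H` under policy `σ`. -/
def val (ρ : S → ℝ) (P : ℕ → S → (∀ i, A i) → S → ℝ) (H : ℕ)
    (f : ℕ → S → (∀ i, A i) → ℝ) (σ : HPolicy S A) : ℝ :=
  ∑ t ∈ Finset.range H, ∑ s, ∑ a, occ ρ P σ t s a * f t s a

/-- Non-Markovian stochastic modification for player `i`:
`φ t hist s b c` is the probability of replacing the sampled action `b` by `c`. -/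
abbrev NMMod (S : Type) (A : ι → Type) (i : ι) :=
  (t : ℕ) → (Fin t → S × (∀ i, A i)) → S → A i → A i → ℝ

def IsNMMod {i : ι} (φ : NMMod S A i) : Prop := ∀ t h s b, IsDist (φ t h s b)

/-- Markovian stochastic modification for player `i`. -/
abbrev MMod (S : Type) (A : ι → Type) (i : ι) := ℕ → S → A i → A i → ℝ

def IsMMod {i : ι} (φ : MMod S A i) : Prop := ∀ t s b, IsDist (φ t s b)

/-- A Markovian modification viewed as a non-Markovian one. -/
def mliftMod {i : ι} (φ : MMod S A i) : NMMod S A i := fun t _ s b c => φ t s b c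

/-- The modified (history-dependent) policy `φ ∘ π`. -/
def modNM (i : ι) (φ : NMMod S A i) (π : MPolicy S A) : HPolicy S A :=
  fun t h s a => ∑ b : A i, φ t h s b (a i) * π t s (Function.update a i b)

/-- The modified Markovian policy `φ ∘ π` for a Markovian modification. -/
def modM (i : ι) (φ : MMod S A i) (π : MPolicy S A) : MPolicy S A :=
  fun t s a => ∑ b : A i, φ t s b (a i) * π t s (Function.update a i b)

/-- Markovian deterministic modifications over horizon `H`. -/
abbrev DMod (S : Type) (A : ι → Type) (H : ℕ) (i : ι) := Fin H → S → A i → A i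

/-- A deterministic modification viewed as a Markovian stochastic one
(identity beyond the horizon). -/
def detToM {H : ℕ} {i : ι} (k : DMod S A H i) : MMod S A i :=
  fun t s b c => if h : t < H then (if c = k ⟨t, h⟩ s b then 1 else 0)
                 else (if c = b then 1 else 0)

/-! ### The first augmented MDP (for a fixed player `i` and Markovian policy `π`) -/

/-- Transition kernel of the first augmented MDP, between genuine augmented states. -/
def Ptilde (P : ℕ → S → (∀ i, A i) → S → ℝ) (π : MPolicy S A) (i : ι) (t : ℕ)
    (x : (Fin t → S × (∀ i, A i)) × S × A i) (ahat : A i)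
    (y : (Fin (t+1) → S × (∀ i, A i)) × S × A i) : ℝ :=
  if (∀ k : Fin t, y.1 k.castSucc = x.1 k) ∧ (y.1 (Fin.last t)).1 = x.2.1 ∧
      (y.1 (Fin.last t)).2 i = ahat then
    (1 / (Fintype.card (A i) : ℝ)) * P t x.2.1 (y.1 (Fin.last t)).2 y.2.1 *
      π t x.2.1 (Function.update (y.1 (Fin.last t)).2 i x.2.2)
  else 0

/-- Transition probability into the absorbing state `b` in the first augmented MDP. -/
def PtildeB (π : MPolicy S A) (i : ι) (t : ℕ)
    (x : (Fin t → S × (∀ i, A i)) × S × A i) (_ahat : A i) : ℝ :=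
  1 - ∑ a : ∀ i, A i, if a i = x.2.2 then π t x.2.1 a else 0

/-- Initial distribution of the augmented MDPs: `ρ̃(s, aⁱ) = ρ(s)/|Aⁱ|`. -/
def rhoTilde (ρ : S → ℝ) (i : ι) (x : S × A i) : ℝ := ρ x.1 / (Fintype.card (A i) : ℝ)

/-- Occupancy measure of a (history-dependent) policy `φ` in the first augmented MDP. -/
def dtil (ρ : S → ℝ) (P : ℕ → S → (∀ i, A i) → S → ℝ) (π : MPolicy S A)
    (i : ι) (φ : NMMod S A i) :
    (t : ℕ) → ((Fin t → S × (∀ i, A i)) × S × A i) → A i → ℝ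
  | 0, x, b => rhoTilde ρ i x.2 * φ 0 x.1 x.2.1 x.2.2 b
  | (t+1), x, b =>
      (∑ x' : (Fin t → S × (∀ i, A i)) × S × A i, ∑ c : A i,
        dtil ρ P π i φ t x' c * Ptilde P π i t x' c x) * φ (t+1) x.1 x.2.1 x.2.2 b

/-! ### The second augmented MDP -/

/-- Transition kernel of the second augmented MDP (states `S × A i`). -/
def Pbar (P : ℕ → S → (∀ i, A i) → S → ℝ) (π : MPolicy S A) (i : ι) (t : ℕ)
    (x : S × A i) (ahat : A i) (y : S × A i) : ℝ :=
  (1 / (Fintype.card (A i) : ℝ)) *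
    ∑ a : ∀ i, A i, if a i = ahat then
      P t x.1 a y.1 * π t x.1 (Function.update a i x.2) else 0

/-- Transition probability into the absorbing state `b` in the second augmented MDP. -/
def PbarB (π : MPolicy S A) (i : ι) (t : ℕ) (x : S × A i) (_ahat : A i) : ℝ :=
  1 - ∑ a : ∀ i, A i, if a i = x.2 then π t x.1 a else 0

/-- Occupancy measure of a Markovian modification `φ` (seen as a policy)
in the second augmented MDP. -/
def dbar (ρ : S → ℝ) (P : ℕ → S → (∀ i, A i) → S → ℝ) (π : MPolicy S A)
    (i : ι) (φ : MMod S A i) : ℕ → S × A i → A i → ℝ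
  | 0 => fun x b => rhoTilde ρ i x * φ 0 x.1 x.2 b
  | (t+1) => fun x b =>
      (∑ x' : S × A i, ∑ c : A i, dbar ρ P π i φ t x' c * Pbar P π i t x' c x) *
        φ (t+1) x.1 x.2 b

/-- Reward of the second augmented MDP induced by a reward `r` of the original game. -/
def rbar (π : MPolicy S A) (i : ι) (r : ℕ → S → (∀ i, A i) → ℝ) (t : ℕ)
    (x : S × A i) (ahat : A i) : ℝ :=
  (Fintype.card (A i) : ℝ) ^ (t + 1) *
    ∑ a : ∀ i, A i, if a i = ahat then
      r t x.1 a * π t x.1 (Function.update a i x.2) else 0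

/-! ### Feasible occupancy measures, policy extraction, and the LP -/

/-- The set of feasible state-action occupancy measures (common coupling constraints). -/
def Cd (ρ : S → ℝ) (P : ℕ → S → (∀ i, A i) → S → ℝ) (H J : ℕ)
    (g : Fin J → ℕ → S → (∀ i, A i) → ℝ) (c : Fin J → ℝ) :
    Set (Fin H → S → (∀ i, A i) → ℝ) :=
  {x | ∃ π : MPolicy S A, IsMPolicy π ∧ (∀ j, c j ≤ val ρ P H (g j) (lift π)) ∧
        ∀ (t : Fin H) (s : S) (a : ∀ i, A i), x t s a = occ ρ P (lift π) t.1 s a}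

/-- Policy extraction from an occupancy measure (arbitrary where the marginal vanishes). -/
def Gamma (H : ℕ)
    (d : Fin H → S → (∀ i, A i) → ℝ) : Set (MPolicy S A) :=
  {π | IsMPolicy π ∧ ∀ (t : Fin H) (s : S) (a : ∀ i, A i),
      (∑ a', d t s a') ≠ 0 → π t.1 s a = d t s a / ∑ a', d t s a'}

/-- Objective of the linear program `LPⁱ(π)`. -/
def LPobj (ρ : S → ℝ) (P : ℕ → S → (∀ i, A i) → S → ℝ) (H : ℕ)
    (r : ℕ → S → (∀ i, A i) → ℝ) (i : ι) (π : MPolicy S A)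
    (α : DMod S A H i → ℝ) : ℝ :=
  ∑ k, α k * val ρ P H r (lift (modM i (detToM k) π))

/-- Feasibility for the linear program `LPⁱ(π)`. -/
def LPfeas (ρ : S → ℝ) (P : ℕ → S → (∀ i, A i) → S → ℝ) (H J : ℕ)
    (g : Fin J → ℕ → S → (∀ i, A i) → ℝ) (c : Fin J → ℝ) (i : ι) (π : MPolicy S A)
    (α : DMod S A H i → ℝ) : Prop :=
  (∀ k, 0 ≤ α k) ∧ (∑ k, α k = 1) ∧
    ∀ j, c j ≤ ∑ k, α k * val ρ P H (g j) (lift (modM i (detToM k) π))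

/-- Optimal solutions of the linear program `LPⁱ(π)`. -/
def LPopt (ρ : S → ℝ) (P : ℕ → S → (∀ i, A i) → S → ℝ) (H J : ℕ)
    (g : Fin J → ℕ → S → (∀ i, A i) → ℝ) (c : Fin J → ℝ)
    (r : ℕ → S → (∀ i, A i) → ℝ) (i : ι) (π : MPolicy S A)
    (α : DMod S A H i → ℝ) : Prop :=
  LPfeas ρ P H J g c i π α ∧
    ∀ β, LPfeas ρ P H J g c i π β → LPobj ρ P H r i π β ≤ LPobj ρ P H r i π α

/-- Optimal value `Ψⁱ(π)` of the linear program `LPⁱ(π)`. -/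
noncomputable def Psi (ρ : S → ℝ) (P : ℕ → S → (∀ i, A i) → S → ℝ) (H J : ℕ)
    (g : Fin J → ℕ → S → (∀ i, A i) → ℝ) (c : Fin J → ℝ)
    (r : ℕ → S → (∀ i, A i) → ℝ) (i : ι) (π : MPolicy S A) : ℝ :=
  sSup ((fun α => LPobj ρ P H r i π α) '' {α | LPfeas ρ P H J g c i π α})

end
end MG

/-!
In the second augmented MDP the mass sitting on `(s, aⁱ)` at time `t` is
`μₜ(s) / |Aⁱ|^(t+1)`, where `μₜ` is the state distribution of `φ ∘ π` in the game: the factor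
`1/|Aⁱ|` in `ρ̄` and `P̄` spreads the mass uniformly over the recorded action `aⁱ`, and the
outgoing weight `φ(aⁱ ↦ âⁱ) · π(aⁱ, a⁻ⁱ)` summed over `aⁱ` is exactly `(φ ∘ π)(âⁱ, a⁻ⁱ)`.
The factor `|Aⁱ|^(t+1)` in `r̄` cancels the dilution, stage by stage.
-/

namespace MG

open Finset

variable {S : Type} {ι : Type} {A : ι → Type} [Fintype ι] [DecidableEq ι] [∀ i, Fintype (A i)]

section Occupancy

variable [Fintype S]

noncomputable def stateOcc (ρ : S → ℝ) (P : ℕ → S → (∀ i, A i) → S → ℝ) (σ : HPolicy S A)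
    (t : ℕ) (s : S) : ℝ :=
  ∑ h : Fin t → S × (∀ i, A i), histProb ρ P σ t h s

lemma stateOcc_zero (ρ : S → ℝ) (P : ℕ → S → (∀ i, A i) → S → ℝ) (σ : HPolicy S A) (s : S) :
    stateOcc ρ P σ 0 s = ρ s := by
  simp [stateOcc, histProb]

lemma stateOcc_succ (ρ : S → ℝ) (P : ℕ → S → (∀ i, A i) → S → ℝ) (σ : HPolicy S A)
    (t : ℕ) (s' : S) :
    stateOcc ρ P σ (t + 1) s' = ∑ s, ∑ a, occ ρ P σ t s a * P t s a s' := by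
  calc stateOcc ρ P σ (t + 1) s'
      = ∑ x : S × (∀ i, A i), ∑ h : Fin t → S × (∀ i, A i),
          histProb ρ P σ t h x.1 * σ t h x.1 x.2 * P t x.1 x.2 s' := by
        rw [stateOcc, ← (Fin.snocEquiv fun _ => S × (∀ i, A i)).sum_comp, Fintype.sum_prod_type]
        simp [histProb]
    _ = ∑ s, ∑ a, occ ρ P σ t s a * P t s a s' := by
        simp only [Fintype.sum_prod_type, occ, sum_mul]

lemma occ_lift (ρ : S → ℝ) (P : ℕ → S → (∀ i, A i) → S → ℝ) (σ : MPolicy S A)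
    (t : ℕ) (s : S) (a : ∀ i, A i) :
    occ ρ P (lift σ) t s a = stateOcc ρ P (lift σ) t s * σ t s a := by
  simp [occ, stateOcc, lift, sum_mul]

end Occupancy

variable [∀ i, DecidableEq (A i)]

/-- `Ḡ((s, aⁱ), âⁱ) = ∑_{a⁻ⁱ} G(s, (âⁱ, a⁻ⁱ)) π((aⁱ, a⁻ⁱ) | s)` -/
def augment (π : MPolicy S A) (i : ι) (t : ℕ) (G : S → (∀ i, A i) → ℝ)
    (x : S × A i) (ahat : A i) : ℝ :=
  ∑ a : ∀ i, A i, if a i = ahat then G x.1 a * π t x.1 (Function.update a i x.2) else 0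

lemma Pbar_eq_augment (P : ℕ → S → (∀ i, A i) → S → ℝ) (π : MPolicy S A) (i : ι) (t : ℕ)
    (x : S × A i) (ahat : A i) (y : S × A i) :
    Pbar P π i t x ahat y =
      1 / (Fintype.card (A i) : ℝ) * augment π i t (fun s a => P t s a y.1) x ahat :=
  rfl

lemma rbar_eq_augment (π : MPolicy S A) (i : ι) (r : ℕ → S → (∀ i, A i) → ℝ) (t : ℕ)
    (x : S × A i) (ahat : A i) :
    rbar π i r t x ahat = (Fintype.card (A i) : ℝ) ^ (t + 1) * augment π i t (r t) x ahat :=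
  rfl

variable [Fintype S]

lemma sum_mul_augment (π : MPolicy S A) {i : ι} (φ : MMod S A i) (t : ℕ) (w : S → ℝ)
    (G : S → (∀ i, A i) → ℝ) :
    ∑ x : S × A i, ∑ c, w x.1 * φ t x.1 x.2 c * augment π i t G x c =
      ∑ s, w s * ∑ a, modM i φ π t s a * G s a := by
  rw [Fintype.sum_prod_type]
  refine sum_congr rfl fun s _ => ?_
  have collapse : ∀ ai : A i, ∑ c, φ t s ai c * augment π i t G (s, ai) c =
      ∑ a, φ t s ai (a i) * (G s a * π t s (Function.update a i ai)) := by
    intro ai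
    simp only [augment, mul_sum, mul_ite, mul_zero]
    rw [sum_comm]
    simp
  calc ∑ ai, ∑ c, w s * φ t s ai c * augment π i t G (s, ai) c
      = w s * ∑ ai, ∑ a, φ t s ai (a i) * (G s a * π t s (Function.update a i ai)) := by
        simp only [mul_sum, mul_assoc, ← collapse]
    _ = w s * ∑ a, modM i φ π t s a * G s a := by
        rw [sum_comm]
        simp only [modM, sum_mul]
        refine congrArg (w s * ·) (sum_congr rfl fun a _ => sum_congr rfl fun ai _ => ?_)
        ring

lemma dbar_eq_stateOcc_div_mul (ρ : S → ℝ) (P : ℕ → S → (∀ i, A i) → S → ℝ)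
    (π : MPolicy S A) {i : ι} (φ : MMod S A i) (t : ℕ) (x : S × A i) (b : A i) :
    dbar ρ P π i φ t x b =
      stateOcc ρ P (lift (modM i φ π)) t x.1 / (Fintype.card (A i) : ℝ) ^ (t + 1) *
        φ t x.1 x.2 b := by
  set K := (Fintype.card (A i) : ℝ)
  set μ := stateOcc ρ P (lift (modM i φ π))
  induction t generalizing x b with
  | zero => simp [dbar, rhoTilde, stateOcc_zero, μ, K]
  | succ t ih =>
    have inflow : ∑ x' : S × A i, ∑ c, dbar ρ P π i φ t x' c * Pbar P π i t x' c x =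
        μ (t + 1) x.1 / K ^ (t + 2) := by
      calc ∑ x' : S × A i, ∑ c, dbar ρ P π i φ t x' c * Pbar P π i t x' c x
          = ∑ x' : S × A i, ∑ c, μ t x'.1 / K ^ (t + 2) * φ t x'.1 x'.2 c *
              augment π i t (fun s a => P t s a x.1) x' c := by
            refine sum_congr rfl fun x' _ => sum_congr rfl fun c _ => ?_
            rw [ih, Pbar_eq_augment]
            field_simp
            ring
        _ = μ (t + 1) x.1 / K ^ (t + 2) := by
            rw [sum_mul_augment π φ t (fun s => μ t s / K ^ (t + 2))]
            simp only [μ]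
            rw [stateOcc_succ, sum_div]
            refine sum_congr rfl fun s _ => ?_
            simp only [occ_lift, mul_sum, sum_div]
            refine sum_congr rfl fun a _ => ?_
            ring
    exact congrArg (· * φ (t + 1) x.1 x.2 b) inflow

lemma sum_dbar_mul_rbar (ρ : S → ℝ) (P : ℕ → S → (∀ i, A i) → S → ℝ) (π : MPolicy S A)
    (r : ℕ → S → (∀ i, A i) → ℝ) {i : ι} [Nonempty (A i)] (φ : MMod S A i) (t : ℕ) :
    ∑ x : S × A i, ∑ b, dbar ρ P π i φ t x b * rbar π i r t x b =
      ∑ s, ∑ a, occ ρ P (lift (modM i φ π)) t s a * r t s a := by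
  have hK : (Fintype.card (A i) : ℝ) ≠ 0 := Nat.cast_ne_zero.mpr Fintype.card_ne_zero
  calc ∑ x : S × A i, ∑ b, dbar ρ P π i φ t x b * rbar π i r t x b
      = ∑ x : S × A i, ∑ b, stateOcc ρ P (lift (modM i φ π)) t x.1 * φ t x.1 x.2 b *
          augment π i t (r t) x b := by
        refine sum_congr rfl fun x _ => sum_congr rfl fun b _ => ?_
        rw [dbar_eq_stateOcc_div_mul, rbar_eq_augment]
        field_simp
    _ = ∑ s, ∑ a, occ ρ P (lift (modM i φ π)) t s a * r t s a := by
        rw [sum_mul_augment]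
        simp only [occ_lift, mul_sum, mul_assoc]

end MG

open MG in
theorem second_augmented_mdp_reward_correspondence_general
    {S : Type} {ι : Type} {A : ι → Type}
    [Fintype S] [Fintype ι] [DecidableEq ι]
    [∀ i, Fintype (A i)] [∀ i, DecidableEq (A i)] [∀ i, Nonempty (A i)]
    (ρ : S → ℝ) (P : ℕ → S → (∀ i, A i) → S → ℝ) (π : MPolicy S A)
    (H : ℕ) (r : ℕ → S → (∀ i, A i) → ℝ)
    (i : ι) (φ : MMod S A i) :
    (∑ t ∈ Finset.range H, ∑ x : S × A i, ∑ b : A i,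
        dbar ρ P π i φ t x b * rbar π i r t x b) =
      val ρ P H r (lift (modM i φ π)) :=
  Finset.sum_congr rfl fun t _ => sum_dbar_mul_rbar ρ P π r φ t

open MG in
/-- The expected cumulative reward of a Markovian modification `φ̄ⁱ`, viewed as a policy
of the second augmented MDP with reward `r̄^{i,π}`, equals the expected cumulative
reward of the modified policy `φ̄ⁱ ∘ π` in the original game. -/
theorem second_augmented_mdp_reward_correspondence
    {S : Type} {ι : Type} {A : ι → Type}
    [Fintype S] [DecidableEq S] [Fintype ι] [DecidableEq ι]
    [∀ i, Fintype (A i)] [∀ i, DecidableEq (A i)] [∀ i, Nonempty (A i)]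
    (ρ : S → ℝ) (P : ℕ → S → (∀ i, A i) → S → ℝ) (π : MPolicy S A)
    (hρ : IsDist ρ) (hπ : IsMPolicy π) (hP : IsKernel P)
    (H : ℕ) (r : ℕ → S → (∀ i, A i) → ℝ)
    (i : ι) (φ : MMod S A i) (hφ : IsMMod φ) :
    (∑ t ∈ Finset.range H, ∑ x : S × A i, ∑ b : A i,
        dbar ρ P π i φ t x b * rbar π i r t x b) =
      val ρ P H r (lift (modM i φ π)) :=
  second_augmented_mdp_reward_correspondence_general ρ P π H r i φ
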